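/- arXiv:1303.4406 — 2 statements merged into one kernel-verified Lean document; each statement's English description precedes it below -/
import Mathlib

section
/- Let K, M ⊆ ℝ^d be nonempty compact convex sets such that K ∪ M is convex, and let E ⊆ ℝ^d be a nonempty closed convex set disjoint from K ∪ M. Suppose the distances d(K, E) and d(M, E) are each realized by unique nearest points y = p(K, E) ∈ K and z = p(M, E) ∈ M, and that the distance d(K ∪ M, E) is also realized by a unique nearest point. If p(K ∪ M, E) = y, then z ∈ K ∩ M; moreover d(K ∪ M, E) = d(K, E) and d(K ∩ M, E) = d(M, E). -/
noncomputable section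

/-- The distance `d(K, E) = inf{‖x − y‖ : x ∈ K, y ∈ E}` between two sets. -/
def setDist {d : ℕ} (K E : Set (EuclideanSpace ℝ (Fin d))) : ℝ :=
  sInf (Set.image2 dist K E)

/-- `x` is the unique nearest point of `K` to `E`. -/
def IsUniqueNearestPoint {d : ℕ} (K E : Set (EuclideanSpace ℝ (Fin d)))
    (x : EuclideanSpace ℝ (Fin d)) : Prop :=
  x ∈ K ∧ Metric.infDist x E = setDist K E ∧
    ∀ y ∈ K, Metric.infDist y E = setDist K E → y = x

/-!
The segment `[y, z]` lies in the convex set `K ∪ M`, and since `K`, `M` are closed and the segment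
is connected it meets `K ∩ M` at some `x`. The distance to a convex set is a convex function, so
`d(x, E) ≤ max (d(y, E)) (d(z, E)) = d(z, E)`, the last step because `y` is nearest in `K ∪ M ∋ z`.
Hence `x ∈ M` is also a nearest point of `M`, and uniqueness gives `x = z`.
-/

open Metric Set

theorem Convex.convexOn_infDist {F : Type*} [NormedAddCommGroup F] [NormedSpace ℝ F]
    {E : Set F} (hE : Convex ℝ E) : ConvexOn ℝ univ (infDist · E) := by
  refine ⟨convex_univ, fun x _ y _ a b ha hb hab => ?_⟩
  rcases E.eq_empty_or_nonempty with rfl | hne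
  · simp
  refine le_of_forall_pos_le_add fun ε hε => ?_
  obtain ⟨e₁, he₁, hx⟩ := (infDist_lt_iff hne).1 (lt_add_of_pos_right (infDist x E) hε)
  obtain ⟨e₂, he₂, hy⟩ := (infDist_lt_iff hne).1 (lt_add_of_pos_right (infDist y E) hε)
  calc infDist (a • x + b • y) E ≤ dist (a • x + b • y) (a • e₁ + b • e₂) :=
        infDist_le_dist_of_mem (hE he₁ he₂ ha hb hab)
    _ ≤ a * dist x e₁ + b * dist y e₂ := by
        refine (dist_add_add_le _ _ _ _).trans_eq ?_
        rw [dist_smul₀, dist_smul₀, Real.norm_of_nonneg ha, Real.norm_of_nonneg hb]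
    _ ≤ a * (infDist x E + ε) + b * (infDist y E + ε) := by gcongr
    _ = a • infDist x E + b • infDist y E + ε := by
        simp only [smul_eq_mul]; linear_combination ε * hab

theorem segment_inter_nonempty_of_subset_union {F : Type*} [AddCommGroup F] [Module ℝ F]
    [TopologicalSpace F] [IsTopologicalAddGroup F] [ContinuousSMul ℝ F] {K M : Set F} {y z : F}
    (hK : IsClosed K) (hM : IsClosed M) (hy : y ∈ K) (hz : z ∈ M)
    (h : segment ℝ y z ⊆ K ∪ M) : (segment ℝ y z ∩ (K ∩ M)).Nonempty :=
  isPreconnected_closed_iff.1 (convex_segment y z).isPreconnected K M hK hM h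
    ⟨y, left_mem_segment ℝ y z, hy⟩ ⟨z, right_mem_segment ℝ y z, hz⟩

theorem bddBelow_image2_dist {α : Type*} [PseudoMetricSpace α] {s t : Set α} :
    BddBelow (image2 dist s t) :=
  ⟨0, by rintro _ ⟨a, -, b, -, rfl⟩; exact dist_nonneg⟩

section SetDist

variable {d : ℕ} {A B E : Set (EuclideanSpace ℝ (Fin d))}

theorem setDist_le_infDist {z : EuclideanSpace ℝ (Fin d)} (hz : z ∈ A) :
    setDist A E ≤ infDist z E := by
  rcases E.eq_empty_or_nonempty with rfl | hE
  · simp [setDist]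
  have := hE.to_subtype
  rw [infDist_eq_iInf]
  exact le_ciInf fun e => csInf_le bddBelow_image2_dist (mem_image2_of_mem hz e.2)

theorem setDist_le_setDist_of_subset (h : A ⊆ B) (hA : A.Nonempty) :
    setDist B E ≤ setDist A E := by
  rcases E.eq_empty_or_nonempty with rfl | hE
  · simp [setDist]
  exact csInf_le_csInf bddBelow_image2_dist (hA.image2 hE) (image2_subset_right h)

end SetDist

theorem stmt_6_general (d : ℕ) (K M E : Set (EuclideanSpace ℝ (Fin d)))
    (hKc : IsCompact K)
    (hMc : IsCompact M)
    (hUconv : Convex ℝ (K ∪ M))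
    (hEconv : Convex ℝ E)
    (y z : EuclideanSpace ℝ (Fin d))
    (hy : IsUniqueNearestPoint K E y) (hz : IsUniqueNearestPoint M E z)
    (hyU : IsUniqueNearestPoint (K ∪ M) E y) :
    z ∈ K ∩ M ∧ setDist (K ∪ M) E = setDist K E ∧
      setDist (K ∩ M) E = setDist M E := by
  obtain ⟨hyK, hyd, -⟩ := hy
  obtain ⟨hzM, hzd, hz_unique⟩ := hz
  obtain ⟨-, hyUd, -⟩ := hyU
  have hyz : infDist y E ≤ infDist z E := hyUd ▸ setDist_le_infDist (Or.inr hzM)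
  obtain ⟨x, hx_seg, hxK, hxM⟩ := segment_inter_nonempty_of_subset_union hKc.isClosed
    hMc.isClosed hyK hzM (hUconv.segment_subset (Or.inl hyK) (Or.inr hzM))
  have hxz : infDist x E ≤ infDist z E :=
    (hEconv.convexOn_infDist.le_on_segment trivial trivial hx_seg).trans (max_le hyz le_rfl)
  obtain rfl : x = z := hz_unique x hxM (le_antisymm (hxz.trans_eq hzd) (setDist_le_infDist hxM))
  have hxKM : x ∈ K ∩ M := ⟨hxK, hxM⟩
  refine ⟨hxKM, hyUd.symm.trans hyd, le_antisymm ?_ ?_⟩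
  · exact (setDist_le_infDist hxKM).trans_eq hzd
  · exact setDist_le_setDist_of_subset inter_subset_right ⟨x, hxKM⟩

/-- Let `K, M` be nonempty compact convex sets with `K ∪ M` convex, and `E` a
nonempty closed convex set disjoint from `K ∪ M`. Suppose `y = p(K,E)`,
`z = p(M,E)` and `p(K ∪ M, E)` are unique nearest points. If `p(K ∪ M, E) = y`,
then `z ∈ K ∩ M`, `d(K ∪ M, E) = d(K, E)` and `d(K ∩ M, E) = d(M, E)`. -/
theorem stmt_6 (d : ℕ) (K M E : Set (EuclideanSpace ℝ (Fin d)))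
    (hKc : IsCompact K) (hKne : K.Nonempty) (hKconv : Convex ℝ K)
    (hMc : IsCompact M) (hMne : M.Nonempty) (hMconv : Convex ℝ M)
    (hUconv : Convex ℝ (K ∪ M))
    (hEc : IsClosed E) (hEne : E.Nonempty) (hEconv : Convex ℝ E)
    (hdisj : Disjoint (K ∪ M) E)
    (y z : EuclideanSpace ℝ (Fin d))
    (hy : IsUniqueNearestPoint K E y) (hz : IsUniqueNearestPoint M E z)
    (hyU : IsUniqueNearestPoint (K ∪ M) E y) :
    z ∈ K ∩ M ∧ setDist (K ∪ M) E = setDist K E ∧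
      setDist (K ∩ M) E = setDist M E :=
  stmt_6_general d K M E hKc hMc hUconv hEconv y z hy hz hyU
end
end

section
/- For t > 0 let L_±(t) = {(2tz, ±(1 − ‖2tz‖²)) : z ∈ ℤ^{d−1}, ‖2tz‖ ≤ 1} ⊆ ℝ^{d−1} × ℝ and let P_t = conv(L_−(t) ∪ L_+(t)). Then P_t ⊆ K := {(x, s) : |s| ≤ 1 − ‖x‖²} for every t > 0, and P_t converges to K in the Hausdorff metric as t → 0⁺. -/
noncomputable section

open Topology

/-- The body `K = {(x, s) : |s| ≤ 1 − ‖x‖²}` in `ℝ^{n+1}`, the last coordinate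
being `s`. -/
def paraBody (n : ℕ) : Set (EuclideanSpace ℝ (Fin (n + 1))) :=
  {p | |p (Fin.last n)| ≤ 1 - ∑ i : Fin n, p (Fin.castSucc i) ^ 2}

/-- The point `(x, s) ∈ ℝ^n × ℝ = ℝ^{n+1}`. -/
def liftPt (n : ℕ) (x : EuclideanSpace ℝ (Fin n)) (s : ℝ) :
    EuclideanSpace ℝ (Fin (n + 1)) :=
  (EuclideanSpace.equiv (Fin (n + 1)) ℝ).symm
    (Fin.snoc (EuclideanSpace.equiv (Fin n) ℝ x) s)

/-- The lattice point `2tz ∈ ℝ^n` for `z ∈ ℤ^n`. -/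
def latPt (n : ℕ) (t : ℝ) (z : Fin n → ℤ) : EuclideanSpace ℝ (Fin n) :=
  (EuclideanSpace.equiv (Fin n) ℝ).symm (fun i => 2 * t * (z i : ℝ))

/-- The lifted lattice sets
`L_±(t) = {(2tz, ±(1 − ‖2tz‖²)) : z ∈ ℤ^n, ‖2tz‖ ≤ 1}`; `σ = 1` gives `L_+`
and `σ = -1` gives `L_−`. -/
def liftedLattice (n : ℕ) (t σ : ℝ) : Set (EuclideanSpace ℝ (Fin (n + 1))) :=
  {p | ∃ z : Fin n → ℤ, ‖latPt n t z‖ ≤ 1 ∧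
    p = liftPt n (latPt n t z) (σ * (1 - ‖latPt n t z‖ ^ 2))}

/-- The polytope `P_t = conv(L_−(t) ∪ L_+(t))`. -/
def paraPolytope (n : ℕ) (t : ℝ) : Set (EuclideanSpace ℝ (Fin (n + 1))) :=
  convexHull ℝ (liftedLattice n t (-1) ∪ liftedLattice n t 1)

/-! Convexity of `K`, a sublevel set of `|s| + ‖x‖²`, gives `P_t ⊆ K`. Conversely `P_t` contains
the vertical chord of `K` above every lattice point `y = 2tz` of the unit ball, namely the segment
between the two lifted points. A point `(x, s) ∈ K` lies within `6 √n t` of such a chord: round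
`(1 - √n t) x` (rather than `x`, so that `y` stays in the unit ball) to a lattice point `y`, and
clamp `s` into `[-(1 - ‖y‖²), 1 - ‖y‖²]`, which costs at most `‖y‖² - ‖x‖² ≤ 2 ‖y - x‖`. -/

namespace ParaBody

variable {n : ℕ}

def baseProj (n : ℕ) : EuclideanSpace ℝ (Fin (n + 1)) →ₗ[ℝ] EuclideanSpace ℝ (Fin n) :=
  (EuclideanSpace.equiv (Fin n) ℝ).symm.toLinearMap ∘ₗ LinearMap.funLeft ℝ ℝ Fin.castSucc ∘ₗ
    (EuclideanSpace.equiv (Fin (n + 1)) ℝ).toLinearMap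

@[simp]
lemma baseProj_apply (p : EuclideanSpace ℝ (Fin (n + 1))) (i : Fin n) :
    baseProj n p i = p (Fin.castSucc i) := rfl

@[simp]
lemma liftPt_castSucc (x : EuclideanSpace ℝ (Fin n)) (s : ℝ) (i : Fin n) :
    liftPt n x s (Fin.castSucc i) = x i := by simp [liftPt]

@[simp]
lemma liftPt_last (x : EuclideanSpace ℝ (Fin n)) (s : ℝ) :
    liftPt n x s (Fin.last n) = s := by simp [liftPt]

@[simp]
lemma baseProj_liftPt (x : EuclideanSpace ℝ (Fin n)) (s : ℝ) : baseProj n (liftPt n x s) = x := by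
  ext i; simp

lemma liftPt_baseProj_last (p : EuclideanSpace ℝ (Fin (n + 1))) :
    liftPt n (baseProj n p) (p (Fin.last n)) = p := by
  ext j; induction j using Fin.lastCases <;> simp

lemma dist_liftPt_sq (x y : EuclideanSpace ℝ (Fin n)) (s u : ℝ) :
    dist (liftPt n x s) (liftPt n y u) ^ 2 = dist x y ^ 2 + dist s u ^ 2 := by
  rw [EuclideanSpace.dist_eq, EuclideanSpace.dist_eq, Real.sq_sqrt (by positivity),
    Real.sq_sqrt (by positivity), Fin.sum_univ_castSucc]
  simp

lemma dist_liftPt_le (x y : EuclideanSpace ℝ (Fin n)) (s u : ℝ) :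
    dist (liftPt n x s) (liftPt n y u) ≤ dist x y + dist s u := by
  have := dist_liftPt_sq x y s u
  nlinarith [dist_nonneg (x := x) (y := y), dist_nonneg (x := s) (y := u),
    dist_nonneg (x := liftPt n x s) (y := liftPt n y u)]

lemma liftPt_lineMap (x : EuclideanSpace ℝ (Fin n)) (a b θ : ℝ) :
    liftPt n x (AffineMap.lineMap a b θ) = AffineMap.lineMap (liftPt n x a) (liftPt n x b) θ := by
  ext j; induction j using Fin.lastCases <;> simp [AffineMap.lineMap_apply_module]; ring

lemma paraBody_eq (n : ℕ) : paraBody n = {p | |p (Fin.last n)| + ‖baseProj n p‖ ^ 2 ≤ 1} := by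
  ext p; simp [paraBody, EuclideanSpace.real_norm_sq_eq, le_sub_iff_add_le]

lemma liftPt_mem_paraBody_iff (x : EuclideanSpace ℝ (Fin n)) (s : ℝ) :
    liftPt n x s ∈ paraBody n ↔ |s| + ‖x‖ ^ 2 ≤ 1 := by
  simp [paraBody_eq]

lemma convex_paraBody (n : ℕ) : Convex ℝ (paraBody n) := by
  have habs : ConvexOn ℝ Set.univ fun p : EuclideanSpace ℝ (Fin (n + 1)) => |p (Fin.last n)| := by
    simpa [Function.comp_def] using
      convexOn_univ_norm.comp_linearMap (EuclideanSpace.proj (𝕜 := ℝ) (Fin.last n)).toLinearMap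
  have hsq : ConvexOn ℝ Set.univ fun p : EuclideanSpace ℝ (Fin (n + 1)) => ‖baseProj n p‖ ^ 2 := by
    simpa [Function.comp_def] using
      (convexOn_univ_norm.pow (fun _ _ => norm_nonneg _) 2).comp_linearMap (baseProj n)
  simpa [paraBody_eq] using (habs.add hsq).convex_le 1

lemma liftedLattice_subset_paraBody (t : ℝ) {σ : ℝ} (hσ : |σ| ≤ 1) :
    liftedLattice n t σ ⊆ paraBody n := by
  rintro _ ⟨z, hz, rfl⟩
  have hgap : 0 ≤ 1 - ‖latPt n t z‖ ^ 2 := sub_nonneg.2 (pow_le_one₀ (norm_nonneg _) hz)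
  rw [liftPt_mem_paraBody_iff, abs_mul, abs_of_nonneg hgap]
  nlinarith

lemma paraPolytope_subset_paraBody (n : ℕ) (t : ℝ) : paraPolytope n t ⊆ paraBody n :=
  convexHull_min
    (Set.union_subset (liftedLattice_subset_paraBody t (by norm_num))
      (liftedLattice_subset_paraBody t (by norm_num)))
    (convex_paraBody n)

lemma liftPt_latPt_mem_paraPolytope {t : ℝ} {z : Fin n → ℤ} (hz : ‖latPt n t z‖ ≤ 1) {s : ℝ}
    (hs : |s| + ‖latPt n t z‖ ^ 2 ≤ 1) : liftPt n (latPt n t z) s ∈ paraPolytope n t := by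
  set c := 1 - ‖latPt n t z‖ ^ 2
  have hlow : liftPt n (latPt n t z) (-c) ∈ paraPolytope n t :=
    subset_convexHull ℝ _ (Or.inl ⟨z, hz, by simp [c]⟩)
  have hup : liftPt n (latPt n t z) c ∈ paraPolytope n t :=
    subset_convexHull ℝ _ (Or.inr ⟨z, hz, by simp [c]⟩)
  have hs' : s ∈ segment ℝ (-c) c := by
    rw [segment_eq_Icc (by linarith [abs_nonneg s])]
    exact abs_le.1 (by linarith)
  rw [segment_eq_image_lineMap] at hs'
  obtain ⟨θ, hθ, rfl⟩ := hs'
  rw [liftPt_lineMap]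
  exact (convex_convexHull ℝ _).lineMap_mem hlow hup hθ

lemma exists_dist_latPt_le {t : ℝ} (ht : 0 < t) (x : EuclideanSpace ℝ (Fin n)) :
    ∃ z, dist (latPt n t z) x ≤ √n * t := by
  set z : Fin n → ℤ := fun i => round (x i / (2 * t))
  have hcoord (i : Fin n) : dist (latPt n t z i) (x i) ≤ t := by
    have hround := abs_sub_round (x i / (2 * t))
    have hsplit : latPt n t z i - x i = 2 * t * (round (x i / (2 * t)) - x i / (2 * t)) := by
      simp only [latPt, z, EuclideanSpace.equiv, PiLp.continuousLinearEquiv_symm_apply]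
      field_simp
    rw [Real.dist_eq, hsplit, abs_mul, abs_of_pos (by positivity), abs_sub_comm]
    linarith [mul_le_mul_of_nonneg_left hround (by positivity : (0 : ℝ) ≤ 2 * t)]
  refine ⟨z, ?_⟩
  rw [EuclideanSpace.dist_eq]
  refine (Real.sqrt_le_sqrt (Finset.sum_le_sum fun i _ =>
    pow_le_pow_left₀ dist_nonneg (hcoord i) 2)).trans_eq ?_
  simp [Real.sqrt_mul, ht.le]

lemma exists_latPt_norm_le_one_dist_le {t : ℝ} (ht : 0 < t) (hnt : √n * t ≤ 1)
    {x : EuclideanSpace ℝ (Fin n)} (hx : ‖x‖ ≤ 1) :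
    ∃ z, ‖latPt n t z‖ ≤ 1 ∧ dist (latPt n t z) x ≤ 2 * (√n * t) := by
  set δ := √n * t
  have hδ : 0 ≤ δ := by positivity
  obtain ⟨z, hz⟩ := exists_dist_latPt_le ht ((1 - δ) • x)
  have hshrink : dist ((1 - δ) • x) x = δ * ‖x‖ := by
    rw [dist_eq_norm, show (1 - δ) • x - x = -(δ • x) by module, norm_neg, norm_smul,
      Real.norm_of_nonneg hδ]
  refine ⟨z, ?_, ?_⟩
  · calc ‖latPt n t z‖ ≤ ‖(1 - δ) • x‖ + dist (latPt n t z) ((1 - δ) • x) := by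
          rw [dist_eq_norm]; exact norm_le_norm_add_norm_sub' _ _
      _ ≤ (1 - δ) * 1 + δ := by
          rw [norm_smul, Real.norm_of_nonneg (by linarith)]
          gcongr
      _ = 1 := by ring
  · calc dist (latPt n t z) x ≤ dist (latPt n t z) ((1 - δ) • x) + dist ((1 - δ) • x) x :=
          dist_triangle _ _ _
      _ ≤ δ + δ * 1 := by rw [hshrink]; gcongr
      _ = 2 * δ := by ring

lemma exists_abs_le_abs_sub_le {s c e : ℝ} (hc : 0 ≤ c) (he : 0 ≤ e) (hs : |s| ≤ c + e) :
    ∃ s', |s'| ≤ c ∧ |s - s'| ≤ e := by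
  refine ⟨max (-c) (min c s), ?_, ?_⟩ <;> rw [abs_le] at * <;>
    constructor <;> grind

lemma exists_mem_paraPolytope_dist_le {t : ℝ} (ht : 0 < t) (hnt : √n * t ≤ 1)
    {p : EuclideanSpace ℝ (Fin (n + 1))} (hp : p ∈ paraBody n) :
    ∃ q ∈ paraPolytope n t, dist p q ≤ 6 * (√n * t) := by
  rw [← liftPt_baseProj_last p, liftPt_mem_paraBody_iff] at hp
  rw [← liftPt_baseProj_last p]
  set x := baseProj n p
  set s := p (Fin.last n)
  have hx : ‖x‖ ≤ 1 := (sq_le_one_iff₀ (norm_nonneg x)).1 (by linarith [abs_nonneg s])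
  obtain ⟨z, hz, hzx⟩ := exists_latPt_norm_le_one_dist_le ht hnt hx
  set y := latPt n t z
  set ε := dist y x
  have hnorm_sq : ‖y‖ ^ 2 ≤ ‖x‖ ^ 2 + 2 * ε := by
    have hdiff : ‖y‖ - ‖x‖ ≤ ε := (norm_sub_norm_le y x).trans_eq (dist_eq_norm y x).symm
    nlinarith [mul_le_mul_of_nonneg_right hdiff (add_nonneg (norm_nonneg y) (norm_nonneg x)),
      dist_nonneg (x := y) (y := x)]
  obtain ⟨s', hs', hss'⟩ := exists_abs_le_abs_sub_le (s := s) (c := 1 - ‖y‖ ^ 2) (e := 2 * ε)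
    (sub_nonneg.2 (pow_le_one₀ (norm_nonneg _) hz)) (by positivity) (by linarith)
  refine ⟨liftPt n y s', liftPt_latPt_mem_paraPolytope hz (by linarith), ?_⟩
  calc dist (liftPt n x s) (liftPt n y s') ≤ dist x y + dist s s' := dist_liftPt_le _ _ _ _
    _ ≤ ε + 2 * ε := by rw [dist_comm, Real.dist_eq]; gcongr
    _ ≤ 6 * (√n * t) := by linarith

lemma hausdorffDist_paraPolytope_paraBody_le {t : ℝ} (ht : 0 < t) (hnt : √n * t ≤ 1) :
    Metric.hausdorffDist (paraPolytope n t) (paraBody n) ≤ 6 * (√n * t) :=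
  Metric.hausdorffDist_le_of_mem_dist (by positivity)
    (fun p hp => ⟨p, paraPolytope_subset_paraBody n t hp, by rw [dist_self]; positivity⟩)
    (fun _ hp => exists_mem_paraPolytope_dist_le ht hnt hp)

end ParaBody

open Filter ParaBody

theorem stmt_18_general (n : ℕ) :
    (∀ t : ℝ, 0 < t → paraPolytope n t ⊆ paraBody n) ∧
      Filter.Tendsto (fun t => Metric.hausdorffDist (paraPolytope n t) (paraBody n))
        (𝓝[>] (0 : ℝ)) (𝓝 0) := by
  refine ⟨fun t _ => paraPolytope_subset_paraBody n t, ?_⟩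
  have hlim : Tendsto (fun t : ℝ => √n * t) (𝓝[>] 0) (𝓝 0) :=
    tendsto_nhdsWithin_of_tendsto_nhds (by simpa using (continuous_const_mul (√n)).tendsto 0)
  have hsmall : ∀ᶠ t in 𝓝[>] 0, 0 < t ∧ √n * t ≤ 1 :=
    eventually_mem_nhdsWithin.and (hlim.eventually (eventually_le_nhds one_pos))
  exact squeeze_zero' (.of_forall fun _ => Metric.hausdorffDist_nonneg)
    (hsmall.mono fun t ht => hausdorffDist_paraPolytope_paraBody_le ht.1 ht.2)
    (by simpa using hlim.const_mul 6)

/-- `P_t ⊆ K` for all `t > 0`, and `P_t → K` in the Hausdorff metric as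
`t → 0⁺`. -/
theorem stmt_18 (n : ℕ) (hn : 2 ≤ n) :
    (∀ t : ℝ, 0 < t → paraPolytope n t ⊆ paraBody n) ∧
      Filter.Tendsto (fun t => Metric.hausdorffDist (paraPolytope n t) (paraBody n))
        (𝓝[>] (0 : ℝ)) (𝓝 0) :=
  stmt_18_general n
end
end
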